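/- arXiv:1607.05547 — 2 statements merged into one kernel-verified Lean document; each statement's English description precedes it below -/
import Mathlib

section
/- For all 1 ≤ k < l < n: S(k,l) ≤ S(k,l+1), E(k,l) ≥ E(k,l+1), U(k,l) ≥ U(k,l+1), and O(k,l) ≤ O(k,l+1). -/
/-!
Moving the far end of the shortcut from `p_l` to `p_{l+1}` changes the cost of leaving the
shortcut towards a vertex `z` from `d(p_k, p_l) + δ(l, z)` to `d(p_k, p_{l+1}) + δ(l + 1, z)`.
By the triangle inequality `d(p_k, p_l) ≤ d(p_k, p_{l+1}) + d(p_l, p_{l+1})` and its mirror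
image, this cost can only grow for `z ≤ l` and can only shrink for `z > l`. So distances among
`1, …, l` (giving `S`) and the cycle length (giving `O`) grow, while distances to `n` (giving `U`,
and `E` with the new vertex `l + 1` compared against `l`) shrink.
-/

noncomputable section

variable {X : Type*} [MetricSpace X]

/-- Path distance between vertices `i` and `j` of the path `p₁, …, pₙ`:
the sum of the edge weights `d(p_t, p_{t+1})` for `min i j ≤ t < max i j`. -/
def pathDist (p : ℕ → X) (i j : ℕ) : ℝ :=
  ∑ t ∈ Finset.Ico (min i j) (max i j), dist (p t) (p (t + 1))

/-- Shortest-path distance between vertices `x` and `y` in the unicyclic graph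
`P̄[k,l]` obtained by adding the shortcut `(p_k, p_l)` of weight `d(p_k, p_l)`. -/
def pbar (p : ℕ → X) (k l x y : ℕ) : ℝ :=
  min (pathDist p x y)
    (min (pathDist p x k + dist (p k) (p l) + pathDist p l y)
         (pathDist p x l + dist (p k) (p l) + pathDist p k y))

/-- The length `|C[k,l]|` of the cycle `C[k,l]`. -/
def cycleLen (p : ℕ → X) (k l : ℕ) : ℝ :=
  pathDist p k l + dist (p k) (p l)

/-- The cycle distance `c_{k,l}(x,y)` for `k ≤ x, y ≤ l`. -/
def cycDist (p : ℕ → X) (k l x y : ℕ) : ℝ :=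
  min (pathDist p x y) (cycleLen p k l - pathDist p x y)

/-- `S(k,l) = max_{k ≤ x ≤ l} p̄_{k,l}(1,x)`. -/
def Sfun (p : ℕ → X) (k l : ℕ) : ℝ :=
  sSup ((fun x => pbar p k l 1 x) '' Set.Icc k l)

/-- `E(k,l) = max_{k ≤ x ≤ l} p̄_{k,l}(x,n)`. -/
def Efun (p : ℕ → X) (n k l : ℕ) : ℝ :=
  sSup ((fun x => pbar p k l x n) '' Set.Icc k l)

/-- `U(k,l) = p̄_{k,l}(1,n)`. -/
def Ufun (p : ℕ → X) (n k l : ℕ) : ℝ :=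
  pbar p k l 1 n

/-- `O(k,l) = max_{k ≤ x < y ≤ l} c_{k,l}(x,y)`. -/
def Ofun (p : ℕ → X) (k l : ℕ) : ℝ :=
  sSup {r | ∃ x y : ℕ, k ≤ x ∧ x < y ∧ y ≤ l ∧ r = cycDist p k l x y}

/-- `N(k,l) = max (S(k,l), E(k,l), U(k,l))`. -/
def Nfun (p : ℕ → X) (n k l : ℕ) : ℝ :=
  max (Sfun p k l) (max (Efun p n k l) (Ufun p n k l))

/-- `M(k,l) = max_{1 ≤ x < y ≤ n} p̄_{k,l}(x,y)`, the diameter of `P̄[k,l]`. -/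
def Mfun (p : ℕ → X) (n k l : ℕ) : ℝ :=
  sSup {r | ∃ x y : ℕ, 1 ≤ x ∧ x < y ∧ y ≤ n ∧ r = pbar p k l x y}


theorem csSup_le_csSup_of_forall_exists_le {α : Type*} [ConditionallyCompleteLattice α]
    {s t : Set α} (hs : s.Nonempty) (ht : BddAbove t) (h : ∀ x ∈ s, ∃ y ∈ t, x ≤ y) :
    sSup s ≤ sSup t :=
  csSup_le hs fun x hx =>
    let ⟨_, hy, hxy⟩ := h x hx
    hxy.trans (le_csSup ht hy)

section PathDist

variable (p : ℕ → X)

theorem pathDist_nonneg (i j : ℕ) : 0 ≤ pathDist p i j :=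
  Finset.sum_nonneg fun _ _ => dist_nonneg

theorem pathDist_comm (i j : ℕ) : pathDist p i j = pathDist p j i := by
  rw [pathDist, pathDist, min_comm, max_comm]

theorem pathDist_self (i : ℕ) : pathDist p i i = 0 := by
  simp [pathDist]

theorem pathDist_add_pathDist {a b c : ℕ} (hab : a ≤ b) (hbc : b ≤ c) :
    pathDist p a b + pathDist p b c = pathDist p a c := by
  simp only [pathDist, min_eq_left hab, max_eq_right hab, min_eq_left hbc, max_eq_right hbc,
    min_eq_left (hab.trans hbc), max_eq_right (hab.trans hbc)]
  exact Finset.sum_Ico_consecutive _ hab hbc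

theorem pathDist_succ (a : ℕ) : pathDist p a (a + 1) = dist (p a) (p (a + 1)) := by
  simp [pathDist]

/-- The path is isometric to the real line through the partial sums of its edge weights. -/
theorem pathDist_eq_abs_sub (i j : ℕ) :
    pathDist p i j = |∑ t ∈ Finset.range j, dist (p t) (p (t + 1)) -
      ∑ t ∈ Finset.range i, dist (p t) (p (t + 1))| := by
  wlog hij : i ≤ j generalizing i j
  · rw [pathDist_comm, this j i (le_of_not_ge hij), abs_sub_comm]
  rw [pathDist, min_eq_left hij, max_eq_right hij, Finset.sum_Ico_eq_sub _ hij,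
    abs_of_nonneg (sub_nonneg.2 (Finset.sum_le_sum_of_subset_of_nonneg
      (Finset.range_mono hij) fun _ _ _ => dist_nonneg))]

theorem pathDist_triangle (x y z : ℕ) : pathDist p x z ≤ pathDist p x y + pathDist p y z := by
  simp only [pathDist_eq_abs_sub]
  rw [add_comm]
  exact abs_sub_le _ _ _

end PathDist

section shortcut

variable (p : ℕ → X) {k l x y z : ℕ}

theorem dist_add_pathDist_le_succ (hz : z ≤ l) :
    dist (p k) (p l) + pathDist p l z ≤ dist (p k) (p (l + 1)) + pathDist p (l + 1) z := by
  have hpath : pathDist p (l + 1) z = pathDist p l z + dist (p l) (p (l + 1)) := by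
    rw [pathDist_comm p (l + 1), ← pathDist_add_pathDist p hz l.le_succ, pathDist_succ,
      pathDist_comm p z]
  have := dist_triangle_right (p k) (p l) (p (l + 1))
  linarith

theorem dist_add_pathDist_succ_le (hz : l < z) :
    dist (p k) (p (l + 1)) + pathDist p (l + 1) z ≤ dist (p k) (p l) + pathDist p l z := by
  rw [← pathDist_add_pathDist p l.le_succ hz, pathDist_succ]
  linarith [dist_triangle (p k) (p l) (p (l + 1))]

theorem pbar_le_pbar_succ (hx : x ≤ l) (hy : y ≤ l) :
    pbar p k l x y ≤ pbar p k (l + 1) x y := by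
  have hx' := dist_add_pathDist_le_succ p (k := k) hx
  have hy' := dist_add_pathDist_le_succ p (k := k) hy
  rw [pathDist_comm p l x, pathDist_comm p (l + 1) x] at hx'
  refine min_le_min le_rfl (min_le_min ?_ ?_) <;> linarith

theorem pbar_succ_le_pbar (hkl : k ≤ l) (hy : l < y) :
    pbar p k (l + 1) x y ≤ pbar p k l x y := by
  have hshort := dist_add_pathDist_succ_le p (k := k) hy
  refine le_min (min_le_left _ _) (le_min ?_ ?_)
  · exact (min_le_right _ _).trans <| (min_le_left _ _).trans (by linarith)
  · have hxy := pathDist_triangle p x l y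
    have hky := pathDist_add_pathDist p hkl hy.le
    have := pathDist_nonneg p k l
    have := dist_nonneg (x := p k) (y := p l)
    exact (min_le_left _ _).trans (by linarith)

theorem pbar_right_endpoint (hkl : k ≤ l) (hy : l ≤ y) : pbar p k l l y = pathDist p l y := by
  have hky := pathDist_add_pathDist p hkl hy
  have := pathDist_nonneg p l k
  have := pathDist_nonneg p k l
  have := dist_nonneg (x := p k) (y := p l)
  refine le_antisymm (min_le_left _ _) (le_min le_rfl (le_min ?_ ?_))
  · linarith
  · rw [pathDist_self]
    linarith

theorem cycleLen_le_cycleLen_succ (hkl : k ≤ l) : cycleLen p k l ≤ cycleLen p k (l + 1) := by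
  have hshort := dist_add_pathDist_le_succ p (k := k) hkl
  rw [pathDist_comm p l, pathDist_comm p (l + 1)] at hshort
  unfold cycleLen
  linarith

theorem pbar_succ_succ_le_pbar (hkl : k ≤ l) (hy : l < y) :
    pbar p k (l + 1) (l + 1) y ≤ pbar p k l l y := by
  rw [pbar_right_endpoint p hkl.step hy, pbar_right_endpoint p hkl hy.le,
    ← pathDist_add_pathDist p l.le_succ hy]
  exact le_add_of_nonneg_left (pathDist_nonneg p l (l + 1))

theorem cycDist_le_cycDist_succ (hkl : k ≤ l) (x y : ℕ) :
    cycDist p k l x y ≤ cycDist p k (l + 1) x y :=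
  min_le_min le_rfl (sub_le_sub_right (cycleLen_le_cycleLen_succ p hkl) _)

theorem cycDist_le_cycleLen (x y : ℕ) : cycDist p k l x y ≤ cycleLen p k l :=
  (min_le_right _ _).trans (sub_le_self _ (pathDist_nonneg p x y))

end shortcut

theorem monotonicity_of_SEUO_general {X : Type*} [MetricSpace X]
    (n : ℕ) (p : ℕ → X)
    (k l : ℕ) (hkl : k < l) (hl : l < n) :
    Sfun p k l ≤ Sfun p k (l + 1) ∧
    Efun p n k l ≥ Efun p n k (l + 1) ∧
    Ufun p n k l ≥ Ufun p n k (l + 1) ∧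
    Ofun p k l ≤ Ofun p k (l + 1) := by
  have h1l : 1 ≤ l := Nat.one_le_of_lt hkl
  refine ⟨?_, ?_, pbar_succ_le_pbar p hkl.le hl, ?_⟩
  · refine csSup_le_csSup_of_forall_exists_le ((Set.nonempty_Icc.2 hkl.le).image _)
      ((Set.finite_Icc _ _).image _).bddAbove ?_
    rintro _ ⟨x, ⟨hkx, hxl⟩, rfl⟩
    exact ⟨_, ⟨x, ⟨hkx, hxl.trans l.le_succ⟩, rfl⟩, pbar_le_pbar_succ p h1l hxl⟩
  · refine csSup_le_csSup_of_forall_exists_le ((Set.nonempty_Icc.2 hkl.le.step).image _)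
      ((Set.finite_Icc _ _).image _).bddAbove ?_
    rintro _ ⟨x, ⟨hkx, hxl⟩, rfl⟩
    rcases hxl.lt_or_eq with hxl | rfl
    · exact ⟨_, ⟨x, ⟨hkx, Nat.le_of_lt_succ hxl⟩, rfl⟩, pbar_succ_le_pbar p hkl.le hl⟩
    · exact ⟨_, ⟨l, ⟨hkl.le, le_rfl⟩, rfl⟩, pbar_succ_succ_le_pbar p hkl.le hl⟩
  · refine csSup_le_csSup_of_forall_exists_le ⟨_, k, l, le_rfl, hkl, le_rfl, rfl⟩
      ⟨cycleLen p k (l + 1), ?_⟩ ?_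
    · rintro _ ⟨x, y, -, -, -, rfl⟩
      exact cycDist_le_cycleLen p x y
    · rintro _ ⟨x, y, hkx, hxy, hyl, rfl⟩
      exact ⟨_, ⟨x, y, hkx, hxy, hyl.trans l.le_succ, rfl⟩,
        cycDist_le_cycDist_succ p hkl.le x y⟩

/-- For all `1 ≤ k < l < n`: `S(k,l) ≤ S(k,l+1)`, `E(k,l) ≥ E(k,l+1)`,
`U(k,l) ≥ U(k,l+1)`, and `O(k,l) ≤ O(k,l+1)`. -/
theorem monotonicity_of_SEUO {X : Type*} [MetricSpace X]
    (n : ℕ) (hn : 2 ≤ n) (p : ℕ → X)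
    (k l : ℕ) (hk : 1 ≤ k) (hkl : k < l) (hl : l < n) :
    Sfun p k l ≤ Sfun p k (l + 1) ∧
    Efun p n k l ≥ Efun p n k (l + 1) ∧
    Ufun p n k l ≥ Ufun p n k (l + 1) ∧
    Ofun p k l ≤ Ofun p k (l + 1) :=
  monotonicity_of_SEUO_general n p k l hkl hl
end
end

section
/- Let u, v be vertices of T satisfying δ_T(σ(u), u) + d(u,v) + δ_T(v, σ(v)) < δ_T(σ(u), σ(v)). Then for all vertices s, t of T with σ(s) = σ(t) = σ(u), the shortest-path distance between s and t in T ∪ {(u,v)} equals δ_T(s,t), and it also equals the shortest-path distance between s and t in T ∪ {(σ(u), σ(v))}. -/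
/-!
Write `p = σ u`, `q = σ v`. Both `s` and `t` reach `q` through `p`, so
`δ(v, t) ≥ δ(t, q) - δ(v, q) = δ(t, p) + δ(p, q) - δ(v, q)`, and the hypothesis turns
`δ(p, q) - δ(v, q) - d(u, v)` into more than `δ(p, u)`. Hence any route `s → u → v → t` is longer
than `s → u → p → t`, which is no shorter than `δ(s, t)`. The shortcut `(p, q)` is useless since
`s` and `t` are both at least as close to `p` as to `q`.
-/

noncomputable section

open SimpleGraph

/-- The weight of a walk in a graph whose vertices are embedded in a metric space
via `f`: the sum of the metric distances along its edges. -/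
def walkWeight {V : Type*} {X : Type*} [MetricSpace X] (G : SimpleGraph V) (f : V → X)
    {a b : V} (w : G.Walk a b) : ℝ :=
  (w.darts.map (fun e => dist (f e.fst) (f e.snd))).sum

/-- The shortest-path distance `δ_T(x,y)` in the tree `T = (G, f)`: since edge
weights are nonnegative and the path between `x` and `y` in a tree is unique,
this equals the sum of the edge weights along that unique path. -/
def treeDist {V : Type*} {X : Type*} [MetricSpace X] (G : SimpleGraph V) (f : V → X)
    (x y : V) : ℝ :=
  sInf {r | ∃ w : G.Walk x y, r = walkWeight G f w}

/-- The diameter `diam(T) = max_{x,y} δ_T(x,y)`. -/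
def treeDiam {V : Type*} {X : Type*} [MetricSpace X] (G : SimpleGraph V) (f : V → X) : ℝ :=
  sSup {r | ∃ x y : V, r = treeDist G f x y}

/-- The shortest-path distance between `x` and `y` in the augmented graph
`T ∪ {(u,v)}`, where the shortcut edge `(u,v)` has weight `d(f u, f v)`. -/
def augDist {V : Type*} {X : Type*} [MetricSpace X] (G : SimpleGraph V) (f : V → X)
    (u v x y : V) : ℝ :=
  min (treeDist G f x y)
    (min (treeDist G f x u + dist (f u) (f v) + treeDist G f v y)
         (treeDist G f x v + dist (f u) (f v) + treeDist G f u y))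

/-- The diameter of the augmented graph `T ∪ {(u,v)}`. -/
def augDiam {V : Type*} {X : Type*} [MetricSpace X] (G : SimpleGraph V) (f : V → X)
    (u v : V) : ℝ :=
  sSup {r | ∃ x y : V, r = augDist G f u v x y}

/-- A walk is a *longest path* of `T` if it is a path whose weight equals the
diameter of `T`. -/
def IsLongestPath {V : Type*} {X : Type*} [MetricSpace X] (G : SimpleGraph V) (f : V → X)
    {a b : V} (w : G.Walk a b) : Prop :=
  w.IsPath ∧ walkWeight G f w = treeDiam G f

/-- `P_T`: the set of vertices of `T` that lie on every longest path of `T`. -/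
def PT {V : Type*} {X : Type*} [MetricSpace X] (G : SimpleGraph V) (f : V → X) : Set V :=
  {z | ∀ (a b : V) (w : G.Walk a b), IsLongestPath G f w → z ∈ w.support}

section TreeDist

variable {V : Type*} {X : Type*} [MetricSpace X] (G : SimpleGraph V) (f : V → X)

lemma walkWeight_nonneg {a b : V} (w : G.Walk a b) : 0 ≤ walkWeight G f w :=
  List.sum_nonneg <| by
    simp only [List.mem_map]
    rintro _ ⟨d, -, rfl⟩
    exact dist_nonneg

lemma walkWeight_reverse {a b : V} (w : G.Walk a b) :
    walkWeight G f w.reverse = walkWeight G f w := by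
  unfold walkWeight
  rw [Walk.darts_reverse, List.map_reverse, List.sum_reverse, List.map_map]
  congr 2
  funext d
  exact dist_comm _ _

lemma walkWeight_append {a b c : V} (w₁ : G.Walk a b) (w₂ : G.Walk b c) :
    walkWeight G f (w₁.append w₂) = walkWeight G f w₁ + walkWeight G f w₂ := by
  simp only [walkWeight, Walk.darts_append, List.map_append, List.sum_append]

lemma treeDist_le_walkWeight {x y : V} (w : G.Walk x y) :
    treeDist G f x y ≤ walkWeight G f w :=
  csInf_le ⟨0, by rintro r ⟨w, rfl⟩; exact walkWeight_nonneg G f w⟩ ⟨w, rfl⟩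

lemma treeDist_nonneg (x y : V) : 0 ≤ treeDist G f x y :=
  Real.sInf_nonneg (by rintro r ⟨w, rfl⟩; exact walkWeight_nonneg G f w)

lemma treeDist_comm (x y : V) : treeDist G f x y = treeDist G f y x := by
  have key : ∀ a b : V, {r | ∃ w : G.Walk a b, r = walkWeight G f w} ⊆
      {r | ∃ w : G.Walk b a, r = walkWeight G f w} := by
    rintro a b _ ⟨w, rfl⟩
    exact ⟨w.reverse, (walkWeight_reverse G f w).symm⟩
  exact congrArg sInf ((key x y).antisymm (key y x))

variable {G}

lemma treeDist_triangle (hc : G.Connected) (x y z : V) :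
    treeDist G f x z ≤ treeDist G f x y + treeDist G f y z := by
  obtain ⟨w₁⟩ := hc x y
  obtain ⟨w₂⟩ := hc y z
  suffices h : treeDist G f x z - treeDist G f y z ≤ treeDist G f x y by linarith
  refine le_csInf ⟨_, w₁, rfl⟩ ?_
  rintro _ ⟨a, rfl⟩
  suffices h : treeDist G f x z - walkWeight G f a ≤ treeDist G f y z by linarith
  refine le_csInf ⟨_, w₂, rfl⟩ ?_
  rintro _ ⟨b, rfl⟩
  have := treeDist_le_walkWeight G f (a.append b)
  rw [walkWeight_append] at this
  linarith

lemma augDist_eq_treeDist {u v x y : V}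
    (h₁ : treeDist G f x y ≤ treeDist G f x u + dist (f u) (f v) + treeDist G f v y)
    (h₂ : treeDist G f x y ≤ treeDist G f x v + dist (f u) (f v) + treeDist G f u y) :
    augDist G f u v x y = treeDist G f x y :=
  min_eq_left (le_min h₁ h₂)

lemma augDist_eq_treeDist_of_treeDist_le (hc : G.Connected) {p q x y : V}
    (hx : treeDist G f x p ≤ treeDist G f x q) (hy : treeDist G f y p ≤ treeDist G f y q) :
    augDist G f p q x y = treeDist G f x y := by
  have hy' : treeDist G f p y ≤ treeDist G f q y := by
    rwa [treeDist_comm G f p, treeDist_comm G f q]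
  have hxy := treeDist_triangle f hc x p y
  have := dist_nonneg (x := f p) (y := f q)
  exact augDist_eq_treeDist f (by linarith) (by linarith)

lemma treeDist_le_of_shortcut (hc : G.Connected) {p q u v y : V} (x : V)
    (hy : treeDist G f y q = treeDist G f y p + treeDist G f p q)
    (huv : treeDist G f p u + dist (f u) (f v) + treeDist G f v q < treeDist G f p q) :
    treeDist G f x y ≤ treeDist G f x u + dist (f u) (f v) + treeDist G f v y := by
  have hxy := treeDist_triangle f hc x p y
  have hxp := treeDist_triangle f hc x u p
  have hyq := treeDist_triangle f hc y v q
  have := dist_nonneg (x := f u) (y := f v)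
  rw [treeDist_comm G f p y] at hxy
  rw [treeDist_comm G f u p] at hxp
  rw [treeDist_comm G f v y]
  linarith

lemma augDist_eq_treeDist_of_shortcut (hc : G.Connected) {p q u v x y : V}
    (hx : treeDist G f x q = treeDist G f x p + treeDist G f p q)
    (hy : treeDist G f y q = treeDist G f y p + treeDist G f p q)
    (huv : treeDist G f p u + dist (f u) (f v) + treeDist G f v q < treeDist G f p q) :
    augDist G f u v x y = treeDist G f x y := by
  refine augDist_eq_treeDist f (treeDist_le_of_shortcut f hc x hy huv) ?_
  have := treeDist_le_of_shortcut f hc y hx huv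
  rw [treeDist_comm G f y x, treeDist_comm G f y u, treeDist_comm G f v x] at this
  linarith

end TreeDist

theorem same_subtree_shortcut_useless_general {V : Type*} {X : Type*}
    [MetricSpace X] (G : SimpleGraph V) (hG : G.IsTree) (f : V → X)
    (σ : V → V)
    (hσ_mem : ∀ w : V, σ w ∈ PT G f)
    (hσ_proj : ∀ w : V, ∀ z ∈ PT G f,
      treeDist G f w z = treeDist G f w (σ w) + treeDist G f (σ w) z)
    (u v : V)
    (huv : treeDist G f (σ u) u + dist (f u) (f v) + treeDist G f v (σ v) <
      treeDist G f (σ u) (σ v)) :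
    ∀ s t : V, σ s = σ u → σ t = σ u →
      augDist G f u v s t = treeDist G f s t ∧
      augDist G f (σ u) (σ v) s t = treeDist G f s t := by
  intro s t hs ht
  have hc := hG.connected
  have hsq := hσ_proj s (σ v) (hσ_mem v)
  have htq := hσ_proj t (σ v) (hσ_mem v)
  rw [hs] at hsq
  rw [ht] at htq
  have hpq := treeDist_nonneg G f (σ u) (σ v)
  exact ⟨augDist_eq_treeDist_of_shortcut f hc hsq htq huv,
    augDist_eq_treeDist_of_treeDist_le f hc (by linarith) (by linarith)⟩

/-- Let `σ` map each vertex `w` to the unique vertex of `P_T`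
nearest to `w` (so that `δ_T(w,z) = δ_T(w,σ w) + δ_T(σ w, z)` for all `z ∈ P_T`).
Let `u, v` be vertices satisfying
`δ_T(σ u, u) + d(u,v) + δ_T(v, σ v) < δ_T(σ u, σ v)`. Then for all vertices `s, t`
with `σ s = σ t = σ u`, the shortest-path distance between `s` and `t` in
`T ∪ {(u,v)}` equals `δ_T(s,t)`, and it also equals the shortest-path distance
between `s` and `t` in `T ∪ {(σ u, σ v)}`. -/
theorem same_subtree_shortcut_useless {V : Type*} [Fintype V] {X : Type*}
    [MetricSpace X] (G : SimpleGraph V) (hG : G.IsTree) (f : V → X)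
    (σ : V → V)
    (hσ_mem : ∀ w : V, σ w ∈ PT G f)
    (hσ_proj : ∀ w : V, ∀ z ∈ PT G f,
      treeDist G f w z = treeDist G f w (σ w) + treeDist G f (σ w) z)
    (u v : V)
    (huv : treeDist G f (σ u) u + dist (f u) (f v) + treeDist G f v (σ v) <
      treeDist G f (σ u) (σ v)) :
    ∀ s t : V, σ s = σ u → σ t = σ u →
      augDist G f u v s t = treeDist G f s t ∧
      augDist G f (σ u) (σ v) s t = treeDist G f s t :=
  same_subtree_shortcut_useless_general G hG f σ hσ_mem hσ_proj u v huv
end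
end
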